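/- arXiv:2503.08739 — 3 statements merged into one kernel-verified Lean document; each statement's English description precedes it below -/
import Mathlib

section
/- Let X be a countable set and let N be a natural number. Then there exists a function f : X → ℝ such that the map sending each finite multiset M over X with card M ≤ N to the sum ∑_{x ∈ M} f(x) (counted with multiplicity) is injective on the set of such multisets. Consequently, a sum-pooling readout over node features drawn from a countable universe, with graphs of at most N nodes, can be made injective. -/
/-!
Since `ℝ` has dimension continuum over `ℚ`, a countable `X` can be sent injectively into a
`ℚ`-basis of `ℝ`; for `ℚ`-linearly independent features, distinct multisets have distinct sums.
-/

theorem exists_linearIndependent_rat_real (X : Type*) [Countable X] :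
    ∃ f : X → ℝ, LinearIndependent ℚ f := by
  let b := Module.Basis.ofVectorSpace ℚ ℝ
  have : Infinite (Module.Basis.ofVectorSpaceIndex ℚ ℝ) := by
    refine Cardinal.infinite_iff.mpr ?_
    rw [b.mk_eq_rank'', Real.rank_rat_real]
    exact Cardinal.aleph0_le_continuum
  obtain ⟨e, he⟩ := Countable.exists_injective_nat X
  let g := Infinite.natEmbedding (Module.Basis.ofVectorSpaceIndex ℚ ℝ)
  exact ⟨b ∘ g ∘ e, b.linearIndependent.comp _ (g.injective.comp he)⟩

theorem LinearIndependent.injective_sum_natCast_mul {X K : Type*} [Field K] [CharZero K]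
    {f : X → K} (hf : LinearIndependent ℚ f) :
    Function.Injective fun M : X →₀ ℕ => M.sum fun x n => (n : K) * f x := by
  have hℕ : Function.Injective (Finsupp.linearCombination ℕ f) := hf.restrict_scalars' ℕ
  convert hℕ using 2 with M
  simp only [Finsupp.linearCombination_apply, nsmul_eq_mul]

/-- Sum-pooling over multisets of features from a countable universe, with
multiset cardinality bounded by `N`, can be made injective: there exists a
feature encoding `f : X → ℝ` such that the map
`M ↦ ∑_x M(x) • f(x)` is injective on multisets of card at most `N`.
Here a finite multiset over `X` is a finitely supported `M : X →₀ ℕ`,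
with `card M = ∑_x M(x)`. -/
theorem sum_pooling_injective (X : Type*) [Countable X] (N : ℕ) :
    ∃ f : X → ℝ,
      Set.InjOn (fun M : X →₀ ℕ => M.sum fun x n => (n : ℝ) * f x)
        {M : X →₀ ℕ | (M.sum fun _ n => n) ≤ N} := by
  obtain ⟨f, hf⟩ := exists_linearIndependent_rat_real X
  exact ⟨f, hf.injective_sum_natCast_mul.injOn⟩
end

section
/- Let X be a countable set and let N be a natural number. Then there exists a function f : X → ℝ taking rational values such that for every irrational real number ε, the map sending a pair (c, M) — where c ∈ X and M is a finite multiset over X with card M ≤ N — to (1 + ε)·f(c) + ∑_{x ∈ M} f(x) is injective on the set of such pairs. -/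
/-!
Encode `x` by `f x = b ^ e x` for an injection `e : X → ℕ` and a base `b ≥ 2` exceeding `N`.
The neighbour sum is then a natural number whose base-`b` digits are the multiplicities of `M`
(they are at most `card M ≤ N < b`, so no carries occur), hence it determines `M`. Since `f` is
rational and `1 + ε` is irrational, `(1 + ε) f c + S = (1 + ε) f c' + S'` forces `f c = f c'`
and `S = S'`.
-/

open Finset Function

theorem Irrational.eq_and_eq_of_mul_add_eq {x : ℝ} (hx : Irrational x) {p q r s : ℚ}
    (h : x * p + r = x * q + s) : p = q ∧ r = s := by
  have hpq : p = q := by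
    by_contra hne
    have hirr : Irrational (((p - q : ℚ) : ℝ) * x + ((r - s : ℚ) : ℝ)) :=
      (hx.ratCast_mul (sub_ne_zero.mpr hne)).add_ratCast _
    exact hirr.ne_rat 0 (by push_cast; linarith)
  subst hpq
  exact ⟨rfl, by exact_mod_cast add_left_cancel h⟩

namespace Nat

theorem eq_of_sum_fin_mul_pow_eq {b K : ℕ} (hb : 1 < b) {F G : Fin K → ℕ}
    (hF : ∀ i, F i < b) (hG : ∀ i, G i < b)
    (h : ∑ i, F i * b ^ (i : ℕ) = ∑ i, G i * b ^ (i : ℕ)) : F = G := by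
  refine List.ofFn_injective (ofDigits_inj_of_len_eq hb (by simp) ?_ ?_ ?_)
  · simpa [List.mem_ofFn] using hF
  · simpa [List.mem_ofFn] using hG
  · simpa only [ofDigits_eq_sum_mapIdx, List.mapIdx_eq_ofFn, List.get_ofFn, List.length_ofFn,
      Fin.val_cast, Fin.cast_cast, Fin.cast_eq_self, List.sum_ofFn] using h

end Nat

namespace Finsupp

theorem eq_of_sum_mul_pow_eq {b : ℕ} (hb : 1 < b) {F G : ℕ →₀ ℕ}
    (hF : ∀ n, F n < b) (hG : ∀ n, G n < b)
    (h : (F.sum fun n a => a * b ^ n) = G.sum fun n a => a * b ^ n) : F = G := by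
  obtain ⟨K, hK⟩ := exists_nat_subset_range (F.support ∪ G.support)
  have sum_eq_sum_fin (H : ℕ →₀ ℕ) (hH : H.support ⊆ range K) :
      (H.sum fun n a => a * b ^ n) = ∑ i : Fin K, H i * b ^ (i : ℕ) := by
    rw [Fin.sum_univ_eq_sum_range (fun n => H n * b ^ n)]
    exact sum_of_support_subset H hH _ (by simp)
  rw [sum_eq_sum_fin F (union_subset_left hK), sum_eq_sum_fin G (union_subset_right hK)] at h
  have hFG := Nat.eq_of_sum_fin_mul_pow_eq hb (fun i => hF i) (fun i => hG i) h
  ext n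
  by_cases hn : n < K
  · exact congrFun hFG ⟨n, hn⟩
  · have hnF : n ∉ F.support := fun h => hn (mem_range.mp (hK (mem_union_left _ h)))
    have hnG : n ∉ G.support := fun h => hn (mem_range.mp (hK (mem_union_right _ h)))
    rw [notMem_support_iff.mp hnF, notMem_support_iff.mp hnG]

theorem injOn_sum_mul_pow_comp {X : Type*} {e : X → ℕ} (he : Injective e) {b : ℕ}
    (hb : 1 < b) :
    Set.InjOn (fun M : X →₀ ℕ => M.sum fun x n => n * b ^ e x) {M | degree M < b} := by
  intro M hM M' hM' h
  have entry_lt (M : X →₀ ℕ) (hM : degree M < b) (n : ℕ) : M.mapDomain e n < b :=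
    (le_degree n _).trans_lt (by rwa [degree_mapDomain])
  have sum_mapDomain (M : X →₀ ℕ) :
      ((M.mapDomain e).sum fun n a => a * b ^ n) = M.sum fun x n => n * b ^ e x :=
    sum_mapDomain_index (by simp) (fun _ _ _ => add_mul _ _ _)
  refine mapDomain_injective he (eq_of_sum_mul_pow_eq hb (entry_lt M hM) (entry_lt M' hM') ?_)
  rw [sum_mapDomain, sum_mapDomain]
  exact h

end Finsupp

/-- GIN/HGIN update injectivity: over a countable feature universe `X` and
bound `N`, there is a rational-valued `f : X → ℝ` such that for every
irrational `ε`, the map `(c, M) ↦ (1 + ε) * f c + ∑_x M(x) • f(x)` is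
injective on pairs of a center feature `c` and a finite multiset `M` over `X`
with `card M ≤ N`. -/
theorem gin_update_injective (X : Type*) [Countable X] (N : ℕ) :
    ∃ f : X → ℝ, (∀ x : X, ∃ q : ℚ, f x = (q : ℝ)) ∧
      ∀ ε : ℝ, Irrational ε →
        Set.InjOn
          (fun p : X × (X →₀ ℕ) =>
            (1 + ε) * f p.1 + p.2.sum fun x n => (n : ℝ) * f x)
          {p : X × (X →₀ ℕ) | (p.2.sum fun _ n => n) ≤ N} := by
  obtain ⟨e, he⟩ := Countable.exists_injective_nat X
  have hb : 1 < N + 2 := by omega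
  refine ⟨fun x => ((N + 2) ^ e x : ℕ), fun x => ⟨((N + 2) ^ e x : ℕ), by simp⟩, ?_⟩
  rintro ε hε ⟨c, M⟩ hM ⟨c', M'⟩ hM' h
  simp only [← Nat.cast_mul, ← Nat.cast_finsupp_sum] at h
  obtain ⟨hc, hsum⟩ := (hε.ratCast_add 1).eq_and_eq_of_mul_add_eq (by exact_mod_cast h)
  have hcc' : c = c' := he (Nat.pow_right_injective (le_add_left le_rfl) (by exact_mod_cast hc))
  have degree_lt {M : X →₀ ℕ} (hM : (M.sum fun _ n => n) ≤ N) : Finsupp.degree M < N + 2 :=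
    (show Finsupp.degree M ≤ N from hM).trans_lt (by omega)
  have hMM' : M = M' :=
    Finsupp.injOn_sum_mul_pow_comp he hb (degree_lt hM) (degree_lt hM') (by exact_mod_cast hsum)
  rw [hcc', hMM']
end

section
/- Let X be a countable set, let R be a finite nonempty set (of relation types), and let N be a natural number. Then there exist rational-valued functions f : X → ℝ and f_r : X → ℝ for each r ∈ R, with the following property: for every irrational real number ε, the map sending a tuple (c, (M_r)_{r ∈ R}) — where c ∈ X and each M_r is a finite multiset over X with card M_r ≤ N — to (1 + ε)·f(c) + ∑_{r ∈ R} ∑_{x ∈ M_r} f_r(x) is injective on the set of such tuples. In particular, a relation-type-aware aggregation can simultaneously recover the center feature c and, for every relation type r, the exact multiset M_r of neighbor features linked by relation r. -/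
/-!
Encode the centre by an injection `c : X → ℕ` and the neighbour `x` of type `r` by the
weight `(N + 2) ^ e (r, x)` for an injection `e` of the pairs `(r, x)` into `ℕ`. The typed
aggregation is then `(1 + ε) * c + s` with `s` a natural number, and irrationality of `1 + ε`
separates `c` from `s`.
Since every multiplicity is at most `N < N + 2`, `s` is a base-`(N + 2)` numeral whose digits are
the multiplicities, so uniqueness of base expansions recovers every `M_r`.
-/

open Finsupp Function

theorem Nat.injOn_sum_fin_mul_pow {B K : ℕ} (hB : 1 < B) :
    Set.InjOn (fun a : Fin K → ℕ => ∑ i, a i * B ^ (i : ℕ)) {a | ∀ i, a i < B} := by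
  intro a ha b hb h
  have hofDigits (a : Fin K → ℕ) : ofDigits B (List.ofFn a) = ∑ i, a i * B ^ (i : ℕ) := by
    simp [ofDigits_eq_sum_mapIdx, List.mapIdx_eq_ofFn, List.sum_ofFn]
  refine List.ofFn_injective (ofDigits_inj_of_len_eq hB (by simp) ?_ ?_ ?_)
  · simpa using ha
  · simpa using hb
  · simpa [hofDigits] using h

theorem Finsupp.injOn_sum_mul_pow {B : ℕ} (hB : 1 < B) :
    Set.InjOn (fun D : ℕ →₀ ℕ => D.sum fun j n => n * B ^ j) {D | ∀ j, D j < B} := by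
  intro D hD D' hD' h
  obtain ⟨K, hK⟩ := (D.support ∪ D'.support).exists_nat_subset_range
  have hsum (E : ℕ →₀ ℕ) (hE : E.support ⊆ Finset.range K) :
      (E.sum fun j n => n * B ^ j) = ∑ i : Fin K, E i * B ^ (i : ℕ) := by
    rw [sum_of_support_subset E hE _ (by simp), Fin.sum_univ_eq_sum_range (fun i => E i * B ^ i)]
  have hdigits := Nat.injOn_sum_fin_mul_pow (K := K) hB (fun i => hD i) (fun i => hD' i) <| by
    simpa only [hsum D (Finset.union_subset_left hK), hsum D' (Finset.union_subset_right hK)]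
      using h
  ext j
  by_cases hj : j < K
  · exact congrFun hdigits ⟨j, hj⟩
  · have hjK : j ∉ D.support ∪ D'.support := fun hmem => hj (Finset.mem_range.mp (hK hmem))
    simp_all

theorem Finsupp.injOn_sum_mul_pow_of_injective {ι : Type*} {e : ι → ℕ} (he : Injective e)
    {B : ℕ} (hB : 1 < B) :
    Set.InjOn (fun D : ι →₀ ℕ => D.sum fun i n => n * B ^ e i) {D | ∀ i, D i < B} := by
  have hbound (D : ι →₀ ℕ) (hD : ∀ i, D i < B) (j : ℕ) : mapDomain e D j < B := by
    by_cases hj : j ∈ Set.range e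
    · obtain ⟨i, rfl⟩ := hj
      simpa [mapDomain_apply he] using hD i
    · simpa [mapDomain_of_notMem_range _ _ hj] using hB.pos
  intro D hD D' hD' h
  refine mapDomain_injective he (injOn_sum_mul_pow hB (hbound D hD) (hbound D' hD') ?_)
  simpa [sum_mapDomain_index_inj he] using h

theorem Finsupp.sum_sigmaFinsuppEquivPiFinsupp_symm {η : Type*} [Fintype η] {ιs : η → Type*}
    {α β : Type*} [Zero α] [AddCommMonoid β] (M : ∀ j, ιs j →₀ α)
    {g : (Σ j, ιs j) → α → β} (hg : ∀ i, g i 0 = 0) :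
    (sigmaFinsuppEquivPiFinsupp.symm M).sum g = ∑ j, (M j).sum fun i a => g ⟨j, i⟩ a := by
  rw [sigmaFinsuppEquivPiFinsupp, Equiv.coe_fn_symm_mk, onFinset_sum _ hg]
  exact Finset.univ.sum_sigma _ _

theorem Finsupp.injOn_sum_sum_mul_pow {η : Type*} [Fintype η] {ιs : η → Type*}
    {e : (Σ j, ιs j) → ℕ} (he : Injective e) {B : ℕ} (hB : 1 < B) :
    Set.InjOn (fun M : ∀ j, ιs j →₀ ℕ => ∑ j, (M j).sum fun i n => n * B ^ e ⟨j, i⟩)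
      {M | ∀ j i, M j i < B} := by
  intro M hM M' hM' h
  refine sigmaFinsuppEquivPiFinsupp.symm.injective (injOn_sum_mul_pow_of_injective he hB
    (fun i => hM i.1 i.2) (fun i => hM' i.1 i.2) ?_)
  simpa only [sum_sigmaFinsuppEquivPiFinsupp_symm (g := fun i n => n * B ^ e i) _
    (fun _ => zero_mul _)] using h

theorem Irrational.eq_of_mul_add_eq {x : ℝ} (hx : Irrational x) {a a' s s' : ℚ}
    (h : x * a + s = x * a' + s') : a = a' ∧ s = s' := by
  obtain rfl : a = a' := by
    by_contra hne
    refine (hx.mul_ratCast (sub_ne_zero.mpr hne)).ne_rat (s' - s) ?_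
    push_cast
    linarith
  exact ⟨rfl, by exact_mod_cast add_left_cancel h⟩

theorem hgin_typed_aggregation_injective_general
    (X : Type*) [Countable X] (R : Type*) [Fintype R] (N : ℕ) :
    ∃ (f : X → ℝ) (frel : R → X → ℝ),
      (∀ x : X, ∃ q : ℚ, f x = (q : ℝ)) ∧
      (∀ r : R, ∀ x : X, ∃ q : ℚ, frel r x = (q : ℝ)) ∧
      ∀ ε : ℝ, Irrational ε →
        Set.InjOn
          (fun p : X × (R → (X →₀ ℕ)) =>
            (1 + ε) * f p.1 +
              ∑ r : R, (p.2 r).sum fun x n => (n : ℝ) * frel r x)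
          {p : X × (R → (X →₀ ℕ)) |
            ∀ r : R, ((p.2 r).sum fun _ n => n) ≤ N} := by
  obtain ⟨c, hc⟩ := exists_injective_nat X
  obtain ⟨e, he⟩ := exists_injective_nat (Σ _ : R, X)
  let code (M : R → X →₀ ℕ) : ℕ := ∑ r, (M r).sum fun x n => n * (N + 2) ^ e ⟨r, x⟩
  refine ⟨fun x => c x, fun r x => ((N + 2) ^ e ⟨r, x⟩ : ℕ), fun x => ⟨c x, by simp⟩,
    fun r x => ⟨(N + 2) ^ e ⟨r, x⟩, by simp⟩, fun ε hε p hp q hq hpq => ?_⟩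
  have hdigit (M : R → X →₀ ℕ) (hM : ∀ r, ((M r).sum fun _ n => n) ≤ N) (r : R) (x : X) :
      M r x < N + 2 := by
    have hle : M r x ≤ (M r).sum fun _ n => n :=
      single_eval_le_sum (g := id) (M r) rfl (fun _ => Nat.zero_le _) x
    have := hM r
    omega
  obtain ⟨hcenter, hcodes⟩ := (hε.ratCast_add 1).eq_of_mul_add_eq (a := c p.1) (a' := c q.1)
    (s := code p.2) (s' := code q.2) (by push_cast [code, Finsupp.sum] at hpq ⊢; exact hpq)
  exact Prod.ext (hc (by exact_mod_cast hcenter)) (injOn_sum_sum_mul_pow he (by omega)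
    (hdigit p.2 hp) (hdigit q.2 hq) (by exact_mod_cast hcodes))

/-- Core of HGIN's expressive-power theorem: over a countable feature universe
`X`, a finite nonempty set `R` of relation types, and bound `N`, there exist
rational-valued encodings `f : X → ℝ` and `frel : R → X → ℝ` such that for
every irrational `ε`, the typed aggregation
`(c, (M_r)_r) ↦ (1 + ε) * f c + ∑_{r ∈ R} ∑_x (M_r x) • frel r x`
is injective on tuples of a center feature `c` and per-relation-type finite
multisets `M_r` over `X` each of card at most `N`. -/
theorem hgin_typed_aggregation_injective
    (X : Type*) [Countable X] (R : Type*) [Fintype R] [Nonempty R] (N : ℕ) :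
    ∃ (f : X → ℝ) (frel : R → X → ℝ),
      (∀ x : X, ∃ q : ℚ, f x = (q : ℝ)) ∧
      (∀ r : R, ∀ x : X, ∃ q : ℚ, frel r x = (q : ℝ)) ∧
      ∀ ε : ℝ, Irrational ε →
        Set.InjOn
          (fun p : X × (R → (X →₀ ℕ)) =>
            (1 + ε) * f p.1 +
              ∑ r : R, (p.2 r).sum fun x n => (n : ℝ) * frel r x)
          {p : X × (R → (X →₀ ℕ)) |
            ∀ r : R, ((p.2 r).sum fun _ n => n) ≤ N} :=
  hgin_typed_aggregation_injective_general X R N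
end
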